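/- Let $0<q<1$ and $f\in C[0,1]$. For every $R>0$ and $|z|\leq R$, the entire function $D_{\infty,q}f$ satisfies $|(D_{\infty,q}f)(z)| \leq \|f\|_{C[0,1]} \cdot \frac{(-q;q)_\infty}{(q;q)_\infty} \cdot (-R;q)_\infty$. In particular, $M(r; D_{\infty,q}f) = O((-r;q)_\infty)$ as $r\to\infty$. -/

import Mathlib

open Filter Finset Asymptotics

/-- Finite q-Pochhammer symbol `(a;q)_n` over `ℂ`. -/
noncomputable def qpC (q a : ℂ) (n : ℕ) : ℂ := ∏ i ∈ Finset.range n, (1 - a * q ^ i)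

/-- Infinite q-Pochhammer symbol `(a;q)_∞` over `ℂ`. -/
noncomputable def qpiC (q a : ℂ) : ℂ := ∏' i : ℕ, (1 - a * q ^ i)

/-- Finite q-Pochhammer symbol `(a;q)_n` over `ℝ`. -/
noncomputable def qpR (q a : ℝ) (n : ℕ) : ℝ := ∏ i ∈ Finset.range n, (1 - a * q ^ i)

/-- Infinite q-Pochhammer symbol `(a;q)_∞` over `ℝ`. -/
noncomputable def qpiR (q a : ℝ) : ℝ := ∏' i : ℕ, (1 - a * q ^ i)

section helpers
variable {q : ℝ} (hq0 : 0 < q) (hq1 : q < 1)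

include hq0 hq1 in
lemma sum_geom (c : ℝ) : Summable (fun i : ℕ => c * q ^ i) :=
  (summable_geometric_of_lt_one hq0.le hq1).mul_left c

include hq0 hq1 in
lemma hasProd_one_add (c : ℝ) (hc : 0 ≤ c) :
    HasProd (fun i : ℕ => 1 - (-c) * q ^ i) (qpiR q (-c)) := by
  have hpos : ∀ (_ : Unit) (i : ℕ), 0 < (fun (i : ℕ) (_ : Unit) => 1 - (-c) * q^i) i () := by
    intro _ i
    have : 0 ≤ c * q ^ i := by positivity
    simp only; nlinarith
  have hlog : Summable (fun i : ℕ => Real.log (1 - (-c) * q ^ i)) := by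
    refine Summable.of_nonneg_of_le (fun i => ?_) (fun i => ?_) (sum_geom hq0 hq1 c)
    · have h0 : 0 ≤ c * q ^ i := by positivity
      exact Real.log_nonneg (by nlinarith)
    · have h1 : (0:ℝ) < 1 - (-c) * q ^ i := hpos () i
      have := Real.log_le_sub_one_of_pos h1
      nlinarith
  exact (Real.multipliable_of_summable_log (hpos ()) hlog).hasProd

include hq0 hq1 in
lemma fact_q_pos (i : ℕ) : 0 < 1 - q * q ^ i := by
  have h1 : q ^ i ≤ 1 := pow_le_one₀ hq0.le hq1.le
  nlinarith

include hq0 hq1 in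
lemma hlog_q : Summable (fun i : ℕ => Real.log (1 - q * q ^ i)) := by
    apply Summable.of_abs
    refine Summable.of_nonneg_of_le (fun i => abs_nonneg _)
      (fun i => ?_) (sum_geom hq0 hq1 (q / (1 - q)))
    have h1 : 0 < 1 - q * q ^ i := fact_q_pos hq0 hq1 i
    have h2 : q * q ^ i ≤ q := by nlinarith [pow_le_one₀ hq0.le hq1.le (n := i), hq0.le]
    rw [abs_of_nonpos (Real.log_nonpos (by positivity) (by nlinarith [mul_pos hq0 (pow_pos hq0 i)]))]
    have h3 := Real.log_le_sub_one_of_pos (inv_pos.mpr h1)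
    rw [Real.log_inv] at h3
    have h4 : (1 - q * q ^ i)⁻¹ - 1 = q * q ^ i / (1 - q * q ^ i) := by field_simp; ring
    have h5 : q * q ^ i / (1 - q * q ^ i) ≤ q * q ^ i / (1 - q) := by
      apply div_le_div_of_nonneg_left (by positivity) (by linarith) (by nlinarith)
    calc -Real.log (1 - q * q ^ i) ≤ (1 - q * q ^ i)⁻¹ - 1 := by linarith
    _ ≤ q * q ^ i / (1 - q) := by rw [h4]; exact h5
    _ = q / (1 - q) * q ^ i := by ring

include hq0 hq1 in
lemma hasProd_q : HasProd (fun i : ℕ => 1 - q * q ^ i) (qpiR q q) :=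
  (Real.multipliable_of_summable_log (f := fun i : ℕ => 1 - q * q ^ i)
    (fun i => fact_q_pos hq0 hq1 i) (hlog_q hq0 hq1)).hasProd

include hq0 hq1 in
lemma qpiR_q_pos : 0 < qpiR q q := by
  have := Real.rexp_tsum_eq_tprod (f := fun i : ℕ => 1 - q * q ^ i)
    (fun i => fact_q_pos hq0 hq1 i) (hlog_q hq0 hq1)
  rw [qpiR, ← this]
  exact Real.exp_pos _

include hq0 hq1 in
lemma qpR_q_pos (n : ℕ) : 0 < qpR q q n :=
  Finset.prod_pos (fun i _ => fact_q_pos hq0 hq1 i)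

include hq0 hq1 in
lemma qpiR_le_qpR (n : ℕ) : qpiR q q ≤ qpR q q n := by
  refine le_of_tendsto ((hasProd_q hq0 hq1).tendsto_prod_nat) ?_
  filter_upwards [eventually_ge_atTop n] with m hm
  show ∏ i ∈ Finset.range m, (1 - q * q ^ i) ≤ qpR q q n
  rw [← Finset.prod_range_mul_prod_Ico _ hm]
  have h1 : ∏ i ∈ Finset.Ico n m, (1 - q * q ^ i) ≤ 1 :=
    Finset.prod_le_one (fun i _ => (fact_q_pos hq0 hq1 i).le)
      (fun i _ => by nlinarith [mul_nonneg hq0.le (pow_nonneg hq0.le i)])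
  have h2 := qpR_q_pos hq0 hq1 n
  calc (∏ i ∈ Finset.range n, (1 - q * q ^ i)) * ∏ i ∈ Finset.Ico n m, (1 - q * q ^ i)
      ≤ qpR q q n * 1 := by
        apply mul_le_mul_of_nonneg_left h1 h2.le
  _ = qpR q q n := mul_one _

lemma one_le_fact {c : ℝ} (hq0 : 0 < q) (hc : 0 ≤ c) (i : ℕ) : 1 ≤ 1 - (-c) * q ^ i := by
  nlinarith [mul_nonneg hc (pow_nonneg hq0.le i)]

include hq0 hq1 in
lemma qpR_le_qpiR (c : ℝ) (hc : 0 ≤ c) (n : ℕ) : qpR q (-c) n ≤ qpiR q (-c) := by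
  refine ge_of_tendsto ((hasProd_one_add hq0 hq1 c hc).tendsto_prod_nat) ?_
  filter_upwards [eventually_ge_atTop n] with m hm
  show qpR q (-c) n ≤ ∏ i ∈ Finset.range m, (1 - (-c) * q ^ i)
  rw [← Finset.prod_range_mul_prod_Ico _ hm]
  have h1 : 1 ≤ ∏ i ∈ Finset.Ico n m, (1 - (-c) * q ^ i) := by
    calc (1:ℝ) = ∏ _i ∈ Finset.Ico n m, (1:ℝ) := by simp
    _ ≤ ∏ i ∈ Finset.Ico n m, (1 - (-c) * q ^ i) :=
        Finset.prod_le_prod (fun i _ => zero_le_one) (fun i _ => one_le_fact hq0 hc i)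
  have h2 : 0 ≤ qpR q (-c) n :=
    Finset.prod_nonneg (fun i _ => le_trans zero_le_one (one_le_fact hq0 hc i))
  calc qpR q (-c) n = qpR q (-c) n * 1 := (mul_one _).symm
  _ ≤ (∏ i ∈ Finset.range n, (1 - (-c) * q ^ i)) * ∏ i ∈ Finset.Ico n m, (1 - (-c) * q ^ i) :=
      mul_le_mul_of_nonneg_left h1 h2

include hq0 hq1 in
lemma one_le_qpiR (c : ℝ) (hc : 0 ≤ c) : 1 ≤ qpiR q (-c) := by
  have := qpR_le_qpiR hq0 hq1 c hc 0
  simpa [qpR] using this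
end helpers

/-- Euler partial function `E N = Σ q^(T n + N n)/(q;q)_n`. -/
noncomputable def Eul (q : ℝ) (N : ℕ) : ℝ := ∑' n : ℕ, q ^ (n*(n+1)/2 + N*n) / qpR q q n

section euler
variable {q : ℝ} (hq0 : 0 < q) (hq1 : q < 1)

lemma n_le_T (n N : ℕ) : n ≤ n*(n+1)/2 + N*n := by
  have h : n*(n+1) = n*n + n := by ring
  have h2 : n*n + n ≥ 2*n := by nlinarith
  omega

include hq0 hq1 in
lemma eul_term_le (N n : ℕ) :
    q ^ (n*(n+1)/2 + N*n) / qpR q q n ≤ (1 / qpiR q q) * q ^ n := by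
  have hp := qpiR_q_pos hq0 hq1
  have hp2 := qpR_q_pos hq0 hq1 n
  have h1 : q ^ (n*(n+1)/2 + N*n) ≤ q ^ n :=
    pow_le_pow_of_le_one hq0.le hq1.le (n_le_T n N)
  have h2 : 1 / qpR q q n ≤ 1 / qpiR q q :=
    one_div_le_one_div_of_le hp (qpiR_le_qpR hq0 hq1 n)
  calc q ^ (n*(n+1)/2 + N*n) / qpR q q n
      ≤ q ^ n / qpR q q n := by gcongr
  _ = q ^ n * (1 / qpR q q n) := by ring
  _ ≤ q ^ n * (1 / qpiR q q) := by
      apply mul_le_mul_of_nonneg_left h2 (pow_nonneg hq0.le n)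
  _ = (1 / qpiR q q) * q ^ n := by ring

include hq0 hq1 in
lemma eul_summable (N : ℕ) :
    Summable (fun n : ℕ => q ^ (n*(n+1)/2 + N*n) / qpR q q n) := by
  refine Summable.of_nonneg_of_le (fun n => ?_) (fun n => eul_term_le hq0 hq1 N n)
    (sum_geom hq0 hq1 (1 / qpiR q q))
  exact div_nonneg (pow_nonneg hq0.le _) (qpR_q_pos hq0 hq1 n).le

include hq0 hq1 in
lemma eul_nonneg (N : ℕ) : 0 ≤ Eul q N :=
  tsum_nonneg (fun n => div_nonneg (pow_nonneg hq0.le _) (qpR_q_pos hq0 hq1 n).le)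

lemma Tsucc (m N : ℕ) : (m+1)*(m+1+1)/2 + N*(m+1) = (m*(m+1)/2 + (N+1)*m) + (N+1) := by
  have h : (m+1)*(m+1+1) = m*(m+1) + 2*(m+1) := by ring
  have h2 : m*(m+1) % 2 = 0 := Nat.even_iff.mp (Nat.even_mul_succ_self m)
  have hb1 : N*(m+1) = N*m + N := by ring
  have hb2 : (N+1)*m = N*m + m := by ring
  omega

include hq0 hq1 in
lemma eul_rec (N : ℕ) : Eul q N = (1 + q^(N+1)) * Eul q (N+1) := by
  have hsN := eul_summable hq0 hq1 N
  have hsN1 := eul_summable hq0 hq1 (N+1)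
  have key : Eul q N - Eul q (N+1) = q^(N+1) * Eul q (N+1) := by
    rw [Eul, Eul, ← Summable.tsum_sub hsN hsN1, Summable.tsum_eq_zero_add (hsN.sub hsN1)]
    have h0 : q ^ (0*(0+1)/2 + N*0) / qpR q q 0 - q ^ (0*(0+1)/2 + (N+1)*0) / qpR q q 0 = 0 := by
      norm_num [qpR]
    rw [h0, zero_add, ← tsum_mul_left]
    congr 1
    funext m
    have h1 : qpR q q (m+1) = qpR q q m * (1 - q * q^m) := Finset.prod_range_succ _ _
    have h2 := Tsucc m N
    have h3 : (m+1)*(m+1+1)/2 + (N+1)*(m+1) = ((m+1)*(m+1+1)/2 + N*(m+1)) + (m+1) := by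
      generalize (m+1)*(m+1+1)/2 = a
      ring
    have hne : (1 - q * q^m) ≠ 0 := (fact_q_pos hq0 hq1 m).ne'
    have hpm : qpR q q m ≠ 0 := (qpR_q_pos hq0 hq1 m).ne'
    rw [h2, h3, h2]
    rw [pow_add, pow_add, pow_add, h1]
    field_simp
    ring
  have := eul_nonneg hq0 hq1 (N+1)
  nlinarith [key]

include hq0 hq1 in
lemma eul_prod (N : ℕ) : Eul q 0 = qpR q (-q) N * Eul q N := by
  induction N with
  | zero => simp [qpR]
  | succ n ih =>
      rw [ih, eul_rec hq0 hq1 n]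
      have h : qpR q (-q) (n+1) = qpR q (-q) n * (1 - (-q) * q^n) := Finset.prod_range_succ _ _
      rw [h]
      have : 1 - (-q) * q^n = 1 + q^(n+1) := by rw [pow_succ']; ring
      rw [this]
      ring

end euler

section euler2
variable {q : ℝ} (hq0 : 0 < q) (hq1 : q < 1)

include hq0 hq1 in
lemma eul_le_one_add (N : ℕ) : Eul q N ≤ 1 + q^N * Eul q 0 := by
  have hsN := eul_summable hq0 hq1 N
  have hs0 := eul_summable hq0 hq1 0
  have hN : Eul q N = 1 + ∑' m : ℕ, q ^ ((m+1)*((m+1)+1)/2 + N*(m+1)) / qpR q q (m+1) := by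
    rw [Eul, Summable.tsum_eq_zero_add hsN]
    norm_num [qpR]
  have hterm : ∀ m : ℕ, q ^ ((m+1)*((m+1)+1)/2 + N*(m+1)) / qpR q q (m+1) ≤
      q^N * (q ^ ((m+1)*((m+1)+1)/2 + 0*(m+1)) / qpR q q (m+1)) := by
    intro m
    have hp := qpR_q_pos hq0 hq1 (m+1)
    have he : N + ((m+1)*((m+1)+1)/2 + 0*(m+1)) ≤ (m+1)*((m+1)+1)/2 + N*(m+1) := by
      have : N*(m+1) = N + N*m := by ring
      omega
    have h1 : q ^ ((m+1)*((m+1)+1)/2 + N*(m+1)) ≤ q ^ N * q ^ ((m+1)*((m+1)+1)/2 + 0*(m+1)) := by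
      rw [← pow_add]
      exact pow_le_pow_of_le_one hq0.le hq1.le he
    calc q ^ ((m+1)*((m+1)+1)/2 + N*(m+1)) / qpR q q (m+1)
        ≤ q ^ N * q ^ ((m+1)*((m+1)+1)/2 + 0*(m+1)) / qpR q q (m+1) := by
          rw [div_eq_mul_inv, div_eq_mul_inv]
          exact mul_le_mul_of_nonneg_right h1 (inv_nonneg.mpr hp.le)
    _ = q^N * (q ^ ((m+1)*((m+1)+1)/2 + 0*(m+1)) / qpR q q (m+1)) := by ring
  have hsN' : Summable (fun m : ℕ => q ^ ((m+1)*((m+1)+1)/2 + N*(m+1)) / qpR q q (m+1)) := by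
    have h := hsN.comp_injective (add_left_injective 1)
    exact h.congr (fun m => rfl)
  have hs0' : Summable (fun m : ℕ => q ^ ((m+1)*((m+1)+1)/2 + 0*(m+1)) / qpR q q (m+1)) := by
    have h := hs0.comp_injective (add_left_injective 1)
    exact h.congr (fun m => rfl)
  have hsum_le : ∑' m : ℕ, q ^ ((m+1)*((m+1)+1)/2 + N*(m+1)) / qpR q q (m+1) ≤
      q^N * ∑' m : ℕ, q ^ ((m+1)*((m+1)+1)/2 + 0*(m+1)) / qpR q q (m+1) := by
    have e1 : ∑' m : ℕ, q^N * (q ^ ((m+1)*((m+1)+1)/2 + 0*(m+1)) / qpR q q (m+1)) =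
        q^N * ∑' m : ℕ, q ^ ((m+1)*((m+1)+1)/2 + 0*(m+1)) / qpR q q (m+1) := tsum_mul_left
    rw [← e1]
    exact Summable.tsum_le_tsum hterm hsN' (hs0'.mul_left _)
  have h0 : Eul q 0 = 1 + ∑' m : ℕ, q ^ ((m+1)*((m+1)+1)/2 + 0*(m+1)) / qpR q q (m+1) := by
    rw [Eul, Summable.tsum_eq_zero_add hs0]
    norm_num [qpR]
  have htail0 : ∑' m : ℕ, q ^ ((m+1)*((m+1)+1)/2 + 0*(m+1)) / qpR q q (m+1) ≤ Eul q 0 := by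
    have hnn : (0:ℝ) ≤ ∑' m : ℕ, q ^ ((m+1)*((m+1)+1)/2 + 0*(m+1)) / qpR q q (m+1) :=
      tsum_nonneg (fun m : ℕ =>
        div_nonneg (pow_nonneg hq0.le ((m+1)*((m+1)+1)/2 + 0*(m+1))) (qpR_q_pos hq0 hq1 (m+1)).le)
    linarith [h0]
  have hqN : (0:ℝ) ≤ q ^ N := pow_nonneg hq0.le N
  calc Eul q N = 1 + ∑' m : ℕ, q ^ ((m+1)*((m+1)+1)/2 + N*(m+1)) / qpR q q (m+1) := hN
  _ ≤ 1 + q^N * ∑' m : ℕ, q ^ ((m+1)*((m+1)+1)/2 + 0*(m+1)) / qpR q q (m+1) := by linarith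
  _ ≤ 1 + q^N * Eul q 0 := by nlinarith

include hq0 hq1 in
lemma eul_le_qpiR : Eul q 0 ≤ qpiR q (-q) := by
  have hC1 : 1 ≤ qpiR q (-q) := one_le_qpiR hq0 hq1 q hq0.le
  have hC0 : 0 ≤ qpiR q (-q) := le_trans zero_le_one hC1
  have htend : Tendsto (fun N : ℕ => qpiR q (-q) * (1 + q^N * Eul q 0)) atTop
      (nhds (qpiR q (-q))) := by
    have h1 : Tendsto (fun N : ℕ => q ^ N) atTop (nhds 0) :=
      tendsto_pow_atTop_nhds_zero_of_lt_one hq0.le hq1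
    have h2 := ((h1.mul_const (Eul q 0)).const_add 1).const_mul (qpiR q (-q))
    simpa using h2
  refine ge_of_tendsto htend (Filter.Eventually.of_forall (fun N => ?_))
  have h1 : Eul q 0 = qpR q (-q) N * Eul q N := eul_prod hq0 hq1 N
  have h2 : qpR q (-q) N ≤ qpiR q (-q) := qpR_le_qpiR hq0 hq1 q hq0.le N
  have h3 := eul_nonneg hq0 hq1 N
  have h4 := eul_le_one_add hq0 hq1 N
  calc Eul q 0 = qpR q (-q) N * Eul q N := h1
  _ ≤ qpiR q (-q) * Eul q N := mul_le_mul_of_nonneg_right h2 h3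
  _ ≤ qpiR q (-q) * (1 + q^N * Eul q 0) := mul_le_mul_of_nonneg_left h4 hC0

end euler2

section telescope
variable {q : ℝ} (hq0 : 0 < q) (hq1 : q < 1)

include hq0 hq1 in
lemma tele (N : ℕ) : ∑ j ∈ Finset.range (N+1), q ^ j / qpR q q j = 1 / qpR q q N := by
  induction N with
  | zero => simp [qpR]
  | succ n ih =>
    rw [Finset.sum_range_succ, ih]
    have h1 : qpR q q (n+1) = qpR q q n * (1 - q * q^n) := Finset.prod_range_succ _ _
    have h2 : qpR q q n ≠ 0 := (qpR_q_pos hq0 hq1 n).ne'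
    have h3 : (1 - q * q^n) ≠ 0 := (fact_q_pos hq0 hq1 n).ne'
    rw [h1, pow_succ']
    field_simp
    ring

include hq0 hq1 in
lemma tele_summable : Summable (fun j : ℕ => q ^ j / qpR q q j) := by
  refine Summable.of_nonneg_of_le (fun j => ?_) (fun j => ?_)
    (sum_geom hq0 hq1 (1 / qpiR q q))
  · exact div_nonneg (pow_nonneg hq0.le _) (qpR_q_pos hq0 hq1 j).le
  · have hp := qpiR_q_pos hq0 hq1
    have hp2 := qpR_q_pos hq0 hq1 j
    have h2 : 1 / qpR q q j ≤ 1 / qpiR q q :=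
      one_div_le_one_div_of_le hp (qpiR_le_qpR hq0 hq1 j)
    calc q ^ j / qpR q q j = q ^ j * (1 / qpR q q j) := by ring
    _ ≤ q ^ j * (1 / qpiR q q) := mul_le_mul_of_nonneg_left h2 (pow_nonneg hq0.le j)
    _ = 1 / qpiR q q * q ^ j := by ring

include hq0 hq1 in
lemma tele_tsum_le : ∑' j : ℕ, q ^ j / qpR q q j ≤ 1 / qpiR q q := by
  refine Summable.tsum_le_of_sum_range_le (tele_summable hq0 hq1) (fun n => ?_)
  cases n with
  | zero =>
    simp only [Finset.range_zero, Finset.sum_empty]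
    have := qpiR_q_pos hq0 hq1
    positivity
  | succ N =>
    rw [tele hq0 hq1 N]
    exact one_div_le_one_div_of_le (qpiR_q_pos hq0 hq1) (qpiR_le_qpR hq0 hq1 N)

end telescope

section cx
variable {q : ℝ} (hq0 : 0 < q) (hq1 : q < 1)

lemma qpC_q_eq (n : ℕ) : qpC (q:ℂ) (q:ℂ) n = ((qpR q q n : ℝ) : ℂ) := by
  rw [qpC, qpR]
  push_cast
  rfl

include hq0 hq1 in
lemma norm_qpC_q (n : ℕ) : ‖qpC (q:ℂ) (q:ℂ) n‖ = qpR q q n := by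
  rw [qpC_q_eq, Complex.norm_real, Real.norm_eq_abs, abs_of_pos (qpR_q_pos hq0 hq1 n)]

include hq0 in
lemma norm_qpC_le {R : ℝ} (hR : 0 ≤ R) {z : ℂ} (hz : ‖z‖ ≤ R) (m : ℕ) :
    ‖qpC (q:ℂ) z m‖ ≤ qpR q (-R) m := by
  rw [qpC, qpR, norm_prod]
  apply Finset.prod_le_prod (fun i _ => norm_nonneg _)
  intro i _
  have h1 : ‖z * (q:ℂ)^i‖ = ‖z‖ * q^i := by
    rw [norm_mul, norm_pow, Complex.norm_real, Real.norm_eq_abs, abs_of_pos hq0]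
  calc ‖1 - z*(q:ℂ)^i‖ ≤ ‖(1:ℂ)‖ + ‖z*(q:ℂ)^i‖ := norm_sub_le _ _
  _ = 1 + ‖z‖*q^i := by rw [norm_one, h1]
  _ ≤ 1 - (-R)*q^i := by nlinarith [pow_nonneg hq0.le i, pow_pos hq0 i]

include hq0 hq1 in
lemma norm_qpC_le' {R : ℝ} (hR : 0 ≤ R) {z : ℂ} (hz : ‖z‖ ≤ R) (m : ℕ) :
    ‖qpC (q:ℂ) z m‖ ≤ qpiR q (-R) :=
  le_trans (norm_qpC_le hq0 hR hz m) (qpR_le_qpiR hq0 hq1 R hR m)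

end cx

section main
variable {q : ℝ} (hq0 : 0 < q) (hq1 : q < 1)

include hq0 hq1 in
lemma inner_norm_eq (z : ℂ) (n m : ℕ) :
    ‖((-1) ^ n * (q : ℂ) ^ (n * (n + 1) / 2) / qpC (q:ℂ) (q:ℂ) n) * qpC (q:ℂ) z m‖ =
      q ^ (n * (n + 1) / 2) / qpR q q n * ‖qpC (q:ℂ) z m‖ := by
  rw [norm_mul, norm_div, norm_mul, norm_pow, norm_pow, norm_neg, norm_one, one_pow, one_mul,
    Complex.norm_real, Real.norm_eq_abs, abs_of_pos hq0, norm_qpC_q hq0 hq1]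

include hq0 hq1 in
lemma inner_bound {R : ℝ} (hR : 0 ≤ R) {z : ℂ} (hz : ‖z‖ ≤ R) (j : ℕ) :
    ‖∑' n : ℕ, ((-1) ^ n * (q : ℂ) ^ (n * (n + 1) / 2) / qpC (q:ℂ) (q:ℂ) n) *
      qpC (q:ℂ) z (n + j)‖ ≤ Eul q 0 * qpiR q (-R) := by
  set inner := fun n : ℕ => ((-1) ^ n * (q : ℂ) ^ (n * (n + 1) / 2) / qpC (q:ℂ) (q:ℂ) n) *
      qpC (q:ℂ) z (n + j) with hinner
  have hb : ∀ n : ℕ, ‖inner n‖ ≤ (q ^ (n*(n+1)/2 + 0*n) / qpR q q n) * qpiR q (-R) := by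
    intro n
    rw [hinner]
    simp only
    rw [inner_norm_eq hq0 hq1 z n (n+j)]
    have he : n*(n+1)/2 + 0*n = n*(n+1)/2 := by simp
    rw [he]
    exact mul_le_mul_of_nonneg_left (norm_qpC_le' hq0 hq1 hR hz (n+j))
      (div_nonneg (pow_nonneg hq0.le _) (qpR_q_pos hq0 hq1 n).le)
  have hsb : Summable (fun n : ℕ => (q ^ (n*(n+1)/2 + 0*n) / qpR q q n) * qpiR q (-R)) :=
    (eul_summable hq0 hq1 0).mul_right _
  have hsn : Summable (fun n : ℕ => ‖inner n‖) :=
    Summable.of_nonneg_of_le (fun n => norm_nonneg _) hb hsb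
  calc ‖∑' n : ℕ, inner n‖ ≤ ∑' n : ℕ, ‖inner n‖ := norm_tsum_le_tsum_norm hsn
  _ ≤ ∑' n : ℕ, (q ^ (n*(n+1)/2 + 0*n) / qpR q q n) * qpiR q (-R) := Summable.tsum_le_tsum hb hsn hsb
  _ = Eul q 0 * qpiR q (-R) := by rw [Eul, tsum_mul_right]

end main

section main2
variable {q : ℝ} (hq0 : 0 < q) (hq1 : q < 1)

include hq0 hq1 in
lemma main_bound (f : ℝ → ℝ) (hf : ContinuousOn f (Set.Icc 0 1)) {R : ℝ} (hR : 0 < R)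
    {z : ℂ} (hz : ‖z‖ ≤ R) :
    ‖∑' j : ℕ, ((f (q ^ j) * q ^ j : ℝ) : ℂ) / qpC (q:ℂ) (q:ℂ) j *
        ∑' n : ℕ, ((-1) ^ n * (q : ℂ) ^ (n * (n + 1) / 2) / qpC (q:ℂ) (q:ℂ) n) *
          qpC (q:ℂ) z (n + j)‖ ≤
      (sSup ((fun x => |f x|) '' Set.Icc 0 1)) * (qpiR q (-q) / qpiR q q) * qpiR q (-R) := by
  set M := sSup ((fun x => |f x|) '' Set.Icc 0 1) with hMdef
  have hbdd : BddAbove ((fun x => |f x|) '' Set.Icc 0 1) :=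
    (isCompact_Icc.image_of_continuousOn hf.abs).bddAbove
  have hM : ∀ x ∈ Set.Icc (0:ℝ) 1, |f x| ≤ M := fun x hx => le_csSup hbdd ⟨x, hx, rfl⟩
  have hM0 : 0 ≤ M := le_trans (abs_nonneg (f 0)) (hM 0 ⟨le_refl 0, zero_le_one⟩)
  have hqj : ∀ j : ℕ, q ^ j ∈ Set.Icc (0:ℝ) 1 :=
    fun j => ⟨(pow_pos hq0 j).le, pow_le_one₀ hq0.le hq1.le⟩
  have hE0 : 0 ≤ Eul q 0 := eul_nonneg hq0 hq1 0
  have hPR : 0 ≤ qpiR q (-R) := le_trans zero_le_one (one_le_qpiR hq0 hq1 R hR.le)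
  have hq' : 0 < qpiR q q := qpiR_q_pos hq0 hq1
  set term := fun j : ℕ => ((f (q ^ j) * q ^ j : ℝ) : ℂ) / qpC (q:ℂ) (q:ℂ) j *
        ∑' n : ℕ, ((-1) ^ n * (q : ℂ) ^ (n * (n + 1) / 2) / qpC (q:ℂ) (q:ℂ) n) *
          qpC (q:ℂ) z (n + j) with hterm
  have hb : ∀ j : ℕ, ‖term j‖ ≤ q ^ j / qpR q q j * (M * (Eul q 0 * qpiR q (-R))) := by
    intro j
    rw [hterm]
    simp only
    rw [norm_mul, norm_div, Complex.norm_real, Real.norm_eq_abs, norm_qpC_q hq0 hq1,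
      abs_mul, abs_of_pos (pow_pos hq0 j)]
    have h1 : |f (q ^ j)| * q ^ j / qpR q q j ≤ M * q ^ j / qpR q q j := by
      have h2 := hM _ (hqj j)
      have hp := qpR_q_pos hq0 hq1 j
      have hpw := pow_nonneg hq0.le j
      rw [div_eq_mul_inv, div_eq_mul_inv]
      have hinv : (0:ℝ) ≤ (qpR q q j)⁻¹ := (inv_nonneg).mpr hp.le
      exact mul_le_mul_of_nonneg_right (by nlinarith) hinv
    have h2 : ‖∑' n : ℕ, ((-1) ^ n * (q : ℂ) ^ (n * (n + 1) / 2) / qpC (q:ℂ) (q:ℂ) n) *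
        qpC (q:ℂ) z (n + j)‖ ≤ Eul q 0 * qpiR q (-R) := inner_bound hq0 hq1 hR.le hz j
    calc |f (q ^ j)| * q ^ j / qpR q q j * ‖∑' n : ℕ, ((-1) ^ n * (q : ℂ) ^ (n * (n + 1) / 2) /
          qpC (q:ℂ) (q:ℂ) n) * qpC (q:ℂ) z (n + j)‖
        ≤ (M * q ^ j / qpR q q j) * (Eul q 0 * qpiR q (-R)) := by
          apply mul_le_mul h1 h2 (norm_nonneg _)
          have hp := qpR_q_pos hq0 hq1 j
          have hpw := pow_nonneg hq0.le j
          positivity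
    _ = q ^ j / qpR q q j * (M * (Eul q 0 * qpiR q (-R))) := by ring
  have hsb : Summable (fun j : ℕ => q ^ j / qpR q q j * (M * (Eul q 0 * qpiR q (-R)))) :=
    (tele_summable hq0 hq1).mul_right _
  have hsn : Summable (fun j : ℕ => ‖term j‖) :=
    Summable.of_nonneg_of_le (fun j => norm_nonneg _) hb hsb
  have hEle : Eul q 0 ≤ qpiR q (-q) := eul_le_qpiR hq0 hq1
  calc ‖∑' j : ℕ, term j‖ ≤ ∑' j : ℕ, ‖term j‖ := norm_tsum_le_tsum_norm hsn
  _ ≤ ∑' j : ℕ, q ^ j / qpR q q j * (M * (Eul q 0 * qpiR q (-R))) := Summable.tsum_le_tsum hb hsn hsb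
  _ = (∑' j : ℕ, q ^ j / qpR q q j) * (M * (Eul q 0 * qpiR q (-R))) := tsum_mul_right
  _ ≤ (1 / qpiR q q) * (M * (Eul q 0 * qpiR q (-R))) := by
      apply mul_le_mul_of_nonneg_right (tele_tsum_le hq0 hq1) (by positivity)
  _ = (M * qpiR q (-R) / qpiR q q) * Eul q 0 := by ring
  _ ≤ (M * qpiR q (-R) / qpiR q q) * qpiR q (-q) := by
      apply mul_le_mul_of_nonneg_left hEle (by positivity)
  _ = M * (qpiR q (-q) / qpiR q q) * qpiR q (-R) := by ring

end main2

/-- growth estimate `M(r; D_{∞,q}f) = O((-r;q)_∞)`. -/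
theorem stmt6 (q : ℝ) (hq0 : 0 < q) (hq1 : q < 1) (f : ℝ → ℝ)
    (hf : ContinuousOn f (Set.Icc 0 1)) :
    let D : ℂ → ℂ := fun z => ∑' j : ℕ, ((f (q ^ j) * q ^ j : ℝ) : ℂ) / qpC q q j *
        ∑' n : ℕ, ((-1) ^ n * (q : ℂ) ^ (n * (n + 1) / 2) / qpC q q n) * qpC q z (n + j)
    (∀ R : ℝ, 0 < R → ∀ z : ℂ, ‖z‖ ≤ R →
        ‖D z‖ ≤ (sSup ((fun x => |f x|) '' Set.Icc 0 1)) * (qpiR q (-q) / qpiR q q) *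
          qpiR q (-R)) ∧
      ∃ C > 0, ∀ᶠ r : ℝ in atTop,
        sSup ((fun z => ‖D z‖) '' Metric.closedBall 0 r) ≤ C * qpiR q (-r) := by
  intro D
  have hD : ∀ z : ℂ, D z = ∑' j : ℕ, ((f (q ^ j) * q ^ j : ℝ) : ℂ) / qpC (q:ℂ) (q:ℂ) j *
      ∑' n : ℕ, ((-1) ^ n * (q : ℂ) ^ (n * (n + 1) / 2) / qpC (q:ℂ) (q:ℂ) n) *
        qpC (q:ℂ) z (n + j) := fun z => rfl
  have part1 : ∀ R : ℝ, 0 < R → ∀ z : ℂ, ‖z‖ ≤ R →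
      ‖D z‖ ≤ (sSup ((fun x => |f x|) '' Set.Icc 0 1)) * (qpiR q (-q) / qpiR q q) *
        qpiR q (-R) := by
    intro R hR z hz
    rw [hD]
    exact main_bound hq0 hq1 f hf hR hz
  refine ⟨part1, ?_⟩
  set M := sSup ((fun x => |f x|) '' Set.Icc 0 1) with hMdef
  have hbdd : BddAbove ((fun x => |f x|) '' Set.Icc 0 1) :=
    (isCompact_Icc.image_of_continuousOn hf.abs).bddAbove
  have hM0 : 0 ≤ M :=
    le_trans (abs_nonneg (f 0)) (le_csSup hbdd ⟨0, ⟨le_refl 0, zero_le_one⟩, rfl⟩)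
  have hq' : 0 < qpiR q q := qpiR_q_pos hq0 hq1
  have hqq1 : 1 ≤ qpiR q (-q) := one_le_qpiR hq0 hq1 q hq0.le
  refine ⟨M * (qpiR q (-q) / qpiR q q) + 1, by positivity, ?_⟩
  filter_upwards [eventually_ge_atTop (1:ℝ)] with r hr
  have hr0 : 0 < r := lt_of_lt_of_le one_pos hr
  have hPr : 1 ≤ qpiR q (-r) := one_le_qpiR hq0 hq1 r hr0.le
  refine Real.sSup_le (fun y hy => ?_) (by positivity)
  obtain ⟨z, hzball, rfl⟩ := hy
  have hz : ‖z‖ ≤ r := by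
    rw [Metric.mem_closedBall, dist_zero_right] at hzball
    exact hzball
  have h1 := part1 r hr0 z hz
  have hratio : 0 ≤ M * (qpiR q (-q) / qpiR q q) := by positivity
  calc ‖D z‖ ≤ M * (qpiR q (-q) / qpiR q q) * qpiR q (-r) := h1
  _ ≤ (M * (qpiR q (-q) / qpiR q q) + 1) * qpiR q (-r) := by nlinarith
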